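/- arXiv:2012.03621 — 2 statements merged into one kernel-verified Lean document; each statement's English description precedes it below -/
import Mathlib

section
/- Max-min principle: for each k, t_{n−k+1} = max over k-dimensional right ℍ-subspaces E of ℍⁿ of the minimum of R(S,v) over nonzero v ∈ E, where t₁ ≤ … ≤ t_n are the eigenvalues of the Hermitian quaternionic matrix S. -/
open Quaternion Matrix

/-! In the orthonormal eigenbasis, `v = ∑ uᵢ cᵢ` has `R(S, v) = (∑ tᵢ |cᵢ|²) / ∑ |cᵢ|²`, a weighted
average of the eigenvalues of the eigenvectors it involves. On the `k`-dimensional span of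
`u_{n-k}, …, u_{n-1}` (indices from `0`) it is therefore at least `t_{n-k}`, with equality at
`u_{n-k}`.
Conversely every `k`-dimensional `E` meets the `(n-k+1)`-dimensional span of `u_0, …, u_{n-k}`
in a nonzero vector, where `R(S, v) ≤ t_{n-k}`. -/

open MulOpposite Module Submodule

instance Module.Finite.mulOpposite_self (R : Type*) [Semiring R] : Module.Finite Rᵐᵒᵖ R :=
  Module.Finite.equiv (opLinearEquiv Rᵐᵒᵖ).symm

theorem finrank_fin_fun_mulOpposite (R : Type*) [DivisionRing R] (n : ℕ) :
    finrank Rᵐᵒᵖ (Fin n → R) = n := by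
  rw [Module.finrank_pi_fintype, (opLinearEquiv Rᵐᵒᵖ).finrank_eq, finrank_self]
  simp

theorem Submodule.exists_mem_inf_ne_zero_of_finrank_lt {K V : Type*} [DivisionRing K]
    [AddCommGroup V] [Module K V] [FiniteDimensional K V] {s t : Submodule K V}
    (h : finrank K V < finrank K s + finrank K t) : ∃ v ∈ s ⊓ t, v ≠ 0 := by
  by_contra! hst
  refine h.not_ge (finrank_add_finrank_le_of_disjoint ?_)
  rw [disjoint_iff, eq_bot_iff]
  exact fun v hv => (mem_bot K).mpr (hst v hv)

theorem Matrix.star_op_smul_dotProduct {m R : Type*} [Fintype m] [NonUnitalSemiring R]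
    [StarRing R] (a : Rᵐᵒᵖ) (v x : m → R) : star (a • v) ⬝ᵥ x = star (unop a) * (star v ⬝ᵥ x) := by
  simp only [dotProduct, Finset.mul_sum, Pi.star_apply, Pi.smul_apply, smul_eq_mul_unop, star_mul,
    mul_assoc]

theorem Quaternion.re_sum {R ι : Type*} [CommRing R] (s : Finset ι) (f : ι → ℍ[R]) :
    (∑ i ∈ s, f i).re = ∑ i ∈ s, (f i).re :=
  map_sum (QuaternionAlgebra.reₗ _ _ _) f s

theorem Quaternion.re_star_mul_coe_mul (a : ℍ[ℝ]) (r : ℝ) :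
    (star a * (r * a)).re = r * ‖a‖ ^ 2 := by
  rw [coe_mul_eq_smul, mul_smul_comm, re_smul, star_mul_self, re_coe, normSq_eq_norm_mul_self, sq,
    smul_eq_mul]

section Rayleigh

variable {m ι : Type*} [Fintype m]

noncomputable def rayleigh (S : Matrix m m ℍ[ℝ]) (v : m → ℍ[ℝ]) : ℝ :=
  (star v ⬝ᵥ S *ᵥ v).re / ∑ i, ‖v i‖ ^ 2

theorem re_star_dotProduct_self (v : m → ℍ[ℝ]) : (star v ⬝ᵥ v).re = ∑ i, ‖v i‖ ^ 2 := by
  simp only [dotProduct, Pi.star_apply, star_mul_self, re_sum, re_coe, sq,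
    normSq_eq_norm_mul_self]

theorem sum_norm_sq_pos {v : m → ℍ[ℝ]} (hv : v ≠ 0) : 0 < ∑ i, ‖v i‖ ^ 2 := by
  obtain ⟨i, hi⟩ := Function.ne_iff.mp hv
  exact Finset.sum_pos' (fun _ _ => by positivity) ⟨i, Finset.mem_univ i, by positivity⟩

theorem rayleigh_eq_of_mulVec_eq {S : Matrix m m ℍ[ℝ]} {v : m → ℍ[ℝ]} {μ : ℝ} (hv : v ≠ 0)
    (h : S *ᵥ v = fun l => v l * (μ : ℍ[ℝ])) : rayleigh S v = μ := by
  have h' : S *ᵥ v = op (μ : ℍ[ℝ]) • v := h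
  rw [rayleigh, h', dotProduct_smul, op_smul_eq_mul, mul_coe_eq_smul, re_smul, smul_eq_mul,
    re_star_dotProduct_self, mul_div_cancel_right₀ _ (sum_norm_sq_pos hv).ne']

def QuaternionOrthonormal [DecidableEq ι] (w : ι → m → ℍ[ℝ]) : Prop :=
  ∀ i j, star (w i) ⬝ᵥ w j = if i = j then 1 else 0

namespace QuaternionOrthonormal

variable [DecidableEq ι] {w : ι → m → ℍ[ℝ]}

theorem comp {κ : Type*} [DecidableEq κ] (hw : QuaternionOrthonormal w) {f : κ → ι}
    (hf : Function.Injective f) : QuaternionOrthonormal (w ∘ f) := by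
  intro i j
  simp only [Function.comp_apply, hw (f i) (f j), hf.eq_iff]

theorem ne_zero (hw : QuaternionOrthonormal w) (i : ι) : w i ≠ 0 := by
  intro h
  simpa [h] using hw i i

variable [Fintype ι]

theorem star_sum_smul_dotProduct (hw : QuaternionOrthonormal w) (c : ι → ℍ[ℝ]ᵐᵒᵖ) (j : ι) :
    star (∑ i, c i • w i) ⬝ᵥ w j = star (unop (c j)) := by
  simp only [star_sum, sum_dotProduct, star_op_smul_dotProduct, fun i => hw i j, mul_ite, mul_one,
    mul_zero, Finset.sum_ite_eq', Finset.mem_univ, if_true]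

theorem linearIndependent (hw : QuaternionOrthonormal w) : LinearIndependent ℍ[ℝ]ᵐᵒᵖ w := by
  refine Fintype.linearIndependent_iff.mpr fun c hc j => ?_
  simpa [hc] using (hw.star_sum_smul_dotProduct c j).symm

theorem finrank_span (hw : QuaternionOrthonormal w) :
    finrank ℍ[ℝ]ᵐᵒᵖ (span ℍ[ℝ]ᵐᵒᵖ (Set.range w)) = Fintype.card ι :=
  finrank_span_eq_card hw.linearIndependent

theorem re_star_sum_smul_dotProduct_sum_smul (hw : QuaternionOrthonormal w) (c : ι → ℍ[ℝ]ᵐᵒᵖ)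
    (r : ι → ℝ) :
    (star (∑ i, c i • w i) ⬝ᵥ ∑ i, (c i * op (r i : ℍ[ℝ])) • w i).re = ∑ i, r i * ‖c i‖ ^ 2 := by
  simp only [dotProduct_sum, dotProduct_smul, hw.star_sum_smul_dotProduct, re_sum,
    smul_eq_mul_unop, unop_mul, MulOpposite.unop_op, re_star_mul_coe_mul, norm_unop]

theorem sum_norm_sq_sum_smul (hw : QuaternionOrthonormal w) (c : ι → ℍ[ℝ]ᵐᵒᵖ) :
    ∑ l, ‖(∑ i, c i • w i) l‖ ^ 2 = ∑ i, ‖c i‖ ^ 2 := by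
  rw [← re_star_dotProduct_self]
  simpa using hw.re_star_sum_smul_dotProduct_sum_smul c 1

variable {S : Matrix m m ℍ[ℝ]} {t : ι → ℝ}

theorem rayleigh_sum_smul (hw : QuaternionOrthonormal w)
    (heig : ∀ i, S *ᵥ w i = fun l => w i l * (t i : ℍ[ℝ])) (c : ι → ℍ[ℝ]ᵐᵒᵖ) :
    rayleigh S (∑ i, c i • w i) = (∑ i, t i * ‖c i‖ ^ 2) / ∑ i, ‖c i‖ ^ 2 := by
  have hS : S *ᵥ ∑ i, c i • w i = ∑ i, (c i * op (t i : ℍ[ℝ])) • w i := by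
    simp only [mulVec_sum, mulVec_smul, heig, mul_smul]
    rfl
  rw [rayleigh, hS, hw.re_star_sum_smul_dotProduct_sum_smul, hw.sum_norm_sq_sum_smul]

theorem le_rayleigh_of_mem_span (hw : QuaternionOrthonormal w)
    (heig : ∀ i, S *ᵥ w i = fun l => w i l * (t i : ℍ[ℝ])) {a : ℝ} (ha : ∀ i, a ≤ t i)
    {v : m → ℍ[ℝ]} (hv : v ∈ span ℍ[ℝ]ᵐᵒᵖ (Set.range w)) (hv0 : v ≠ 0) : a ≤ rayleigh S v := by
  obtain ⟨c, rfl⟩ := (mem_span_range_iff_exists_fun _).mp hv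
  have hc := sum_norm_sq_pos hv0
  rw [hw.sum_norm_sq_sum_smul] at hc
  rw [hw.rayleigh_sum_smul heig, le_div_iff₀ hc, Finset.mul_sum]
  gcongr with i
  exact ha i

theorem rayleigh_le_of_mem_span (hw : QuaternionOrthonormal w)
    (heig : ∀ i, S *ᵥ w i = fun l => w i l * (t i : ℍ[ℝ])) {a : ℝ} (ha : ∀ i, t i ≤ a)
    {v : m → ℍ[ℝ]} (hv : v ∈ span ℍ[ℝ]ᵐᵒᵖ (Set.range w)) (hv0 : v ≠ 0) : rayleigh S v ≤ a := by
  obtain ⟨c, rfl⟩ := (mem_span_range_iff_exists_fun _).mp hv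
  have hc := sum_norm_sq_pos hv0
  rw [hw.sum_norm_sq_sum_smul] at hc
  rw [hw.rayleigh_sum_smul heig, div_le_iff₀ hc, Finset.mul_sum]
  gcongr with i
  exact ha i

end QuaternionOrthonormal

end Rayleigh

theorem courant_fischer_max_min {n : ℕ}
    (S : Matrix (Fin n) (Fin n) ℍ[ℝ])
    (t : Fin n → ℝ) (ht : Monotone t) (u : Fin n → Fin n → ℍ[ℝ])
    (horth : ∀ i j, star (u i) ⬝ᵥ u j = if i = j then 1 else 0)
    (heig : ∀ j, S.mulVec (u j) = fun l => u j l * (t j : ℍ[ℝ]))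
    (k : ℕ) (hk : 1 ≤ k) (hkn : k ≤ n) :
    IsGreatest {m : ℝ | ∃ E : Submodule ℍ[ℝ]ᵐᵒᵖ (Fin n → ℍ[ℝ]),
        Module.finrank ℍ[ℝ]ᵐᵒᵖ E = k ∧
        IsLeast {r : ℝ | ∃ v ∈ E, v ≠ 0 ∧
          (star v ⬝ᵥ S.mulVec v).re / (∑ i, ‖v i‖ ^ 2) = r} m}
      (t ⟨n - k, by omega⟩) := by
  set i₀ : Fin n := ⟨n - k, by omega⟩
  have hu : QuaternionOrthonormal u := horth
  have hup := hu.comp (Subtype.val_injective (p := (· ∈ Set.Ici i₀)))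
  have hdown := hu.comp (Subtype.val_injective (p := (· ∈ Set.Iic i₀)))
  refine ⟨⟨span ℍ[ℝ]ᵐᵒᵖ (Set.range (u ∘ Subtype.val : Set.Ici i₀ → _)), ?_, ?_, ?_⟩, ?_⟩
  · rw [hup.finrank_span, Fintype.card_Ici, Fin.card_Ici, Fin.val_mk]
    omega
  · exact ⟨u i₀, subset_span ⟨⟨i₀, Set.self_mem_Ici⟩, rfl⟩, hu.ne_zero i₀,
      rayleigh_eq_of_mulVec_eq (hu.ne_zero i₀) (heig i₀)⟩
  · rintro _ ⟨v, hv, hv0, rfl⟩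
    exact hup.le_rayleigh_of_mem_span (fun i => heig i) (fun i => ht i.2) hv hv0
  · rintro _ ⟨E, hE, hmin⟩
    obtain ⟨v, ⟨hvE, hvF⟩, hv0⟩ := exists_mem_inf_ne_zero_of_finrank_lt
      (t := span ℍ[ℝ]ᵐᵒᵖ (Set.range (u ∘ Subtype.val : Set.Iic i₀ → _))) (by
        rw [hE, hdown.finrank_span, finrank_fin_fun_mulOpposite, Fintype.card_Iic, Fin.card_Iic,
          Fin.val_mk]
        omega)
    exact (hmin.2 ⟨v, hvE, hv0, rfl⟩).trans
      (hdown.rayleigh_le_of_mem_span (fun i => heig i) (fun i => ht i.2) hvF hv0)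
end

section
/- Let S be an n×n Hermitian quaternionic matrix with eigenvalues t₁ ≤ … ≤ t_n, and let λ be a left eigenvalue whose eigenspace V(λ) = {v : Sv = λv} has dimension at least k. Then t_k ≤ Re(λ) ≤ t_{n−k+1}. -/
/-!
For `S v = λ v` with `v ≠ 0` one has `Re (v* S v) = Re λ · ‖v‖²`, because
`Re (v̄ᵢ λ vᵢ) = Re (λ vᵢ v̄ᵢ) = Re λ · |vᵢ|²`. Writing `v = ∑ uⱼ cⱼ` in the orthonormal
eigenbasis gives `Re (v* S v) = ∑ tⱼ |cⱼ|²` and `‖v‖² = ∑ |cⱼ|²`, so `Re λ` is an average of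
the `tⱼ` with weights `|cⱼ|²`. As `dim V(λ) ≥ k`, some nonzero `v ∈ V(λ)` is orthogonal to the
`k - 1` eigenvectors of smallest (resp. largest) eigenvalue, which puts the average above `t_k`
(resp. below `t_{n-k+1}`).
-/

open Quaternion Matrix MulOpposite Module

theorem Submodule.exists_ne_zero_forall_dotProduct_eq_zero {R ι : Type*} [DivisionRing R]
    [Fintype ι] {m : ℕ} (V : Submodule Rᵐᵒᵖ (ι → R)) (hm : m < finrank Rᵐᵒᵖ V)
    (w : Fin m → ι → R) : ∃ v ∈ V, v ≠ 0 ∧ ∀ j, w j ⬝ᵥ v = 0 := by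
  have : FiniteDimensional Rᵐᵒᵖ V := Module.finite_of_finrank_pos (by omega)
  let f : V →ₗ[Rᵐᵒᵖ] Fin m → Rᵐᵒᵖ :=
    { toFun := fun v j => op (w j ⬝ᵥ v)
      map_add' := fun v v' => by ext j; simp [dotProduct_add]
      map_smul' := fun a v => by ext j; simp [dotProduct_smul] }
  obtain ⟨v, hv, hv0⟩ := Submodule.ne_bot_iff _ |>.mp <|
    LinearMap.ker_ne_bot_of_finrank_lt (f := f) (by simpa using hm)
  exact ⟨v, v.2, by simpa using hv0, fun j => op_injective (congrFun hv j)⟩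

theorem Matrix.star_mulVec_dotProduct_mulVec {R ι : Type*} [Semiring R] [StarRing R]
    [Fintype ι] [DecidableEq ι] {U : Matrix ι ι R} (hU : Uᴴ * U = 1) (x y : ι → R) :
    star (U *ᵥ x) ⬝ᵥ U *ᵥ y = star x ⬝ᵥ y := by
  rw [star_mulVec, dotProduct_mulVec, vecMul_vecMul, hU, vecMul_one]

theorem Monotone.mul_sum_le_sum_mul {ι : Type*} [Fintype ι] [LinearOrder ι]
    {t w : ι → ℝ} (ht : Monotone t) (hw : ∀ j, 0 ≤ w j) {i : ι} (hwi : ∀ j < i, w j = 0) :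
    t i * ∑ j, w j ≤ ∑ j, t j * w j := by
  rw [Finset.mul_sum]
  refine Finset.sum_le_sum fun j _ => ?_
  rcases lt_or_ge j i with hji | hij
  · simp [hwi j hji]
  · exact mul_le_mul_of_nonneg_right (ht hij) (hw j)

theorem Monotone.sum_mul_le_mul_sum {ι : Type*} [Fintype ι] [LinearOrder ι]
    {t w : ι → ℝ} (ht : Monotone t) (hw : ∀ j, 0 ≤ w j) {i : ι} (hwi : ∀ j, i < j → w j = 0) :
    ∑ j, t j * w j ≤ t i * ∑ j, w j := by
  rw [Finset.mul_sum]
  refine Finset.sum_le_sum fun j _ => ?_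
  rcases lt_or_ge i j with hij | hji
  · simp [hwi j hij]
  · exact mul_le_mul_of_nonneg_right (ht hji) (hw j)

namespace Quaternion

theorem re_sum_s16 {ι : Type*} (s : Finset ι) (f : ι → ℍ[ℝ]) :
    (∑ i ∈ s, f i).re = ∑ i ∈ s, (f i).re :=
  map_sum (QuaternionAlgebra.reₗ _ _ _) f s

theorem re_mul_comm (a b : ℍ[ℝ]) : (a * b).re = (b * a).re := by
  simp only [re_mul]; ring

variable {ι : Type*} [Fintype ι]

theorem re_star_dotProduct_self (v : ι → ℍ[ℝ]) : (star v ⬝ᵥ v).re = ∑ i, normSq (v i) := by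
  simp [dotProduct, star_mul_self, re_sum_s16]

theorem re_star_dotProduct_mul_left (a : ℍ[ℝ]) (v : ι → ℍ[ℝ]) :
    (star v ⬝ᵥ fun i => a * v i).re = a.re * ∑ i, normSq (v i) := by
  simp only [dotProduct, Pi.star_apply, re_sum_s16, Finset.mul_sum]
  refine Finset.sum_congr rfl fun i _ => ?_
  rw [re_mul_comm, mul_assoc, self_mul_star, mul_coe_eq_smul, re_smul, smul_eq_mul, mul_comm]

theorem re_star_dotProduct_diagonal_mulVec [DecidableEq ι] (t : ι → ℝ) (c : ι → ℍ[ℝ]) :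
    (star c ⬝ᵥ diagonal (fun j => (t j : ℍ[ℝ])) *ᵥ c).re = ∑ j, t j * normSq (c j) := by
  simp only [dotProduct, mulVec_diagonal, Pi.star_apply, re_sum_s16]
  refine Finset.sum_congr rfl fun j _ => ?_
  rw [coe_commutes, ← mul_assoc, star_mul_self, ← coe_mul, re_coe, mul_comm]

theorem sum_normSq_pos {v : ι → ℍ[ℝ]} (hv : v ≠ 0) : 0 < ∑ i, normSq (v i) := by
  obtain ⟨i, hi⟩ := Function.ne_iff.mp hv
  exact Finset.sum_pos' (fun _ _ => normSq_nonneg)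
    ⟨i, Finset.mem_univ i, normSq_nonneg.lt_of_ne' (normSq_ne_zero.mpr hi)⟩

variable [DecidableEq ι] {S U : Matrix ι ι ℍ[ℝ]} {t : ι → ℝ} {a : ℍ[ℝ]} {v : ι → ℍ[ℝ]}

theorem sum_normSq_mulVec (hU : Uᴴ * U = 1) (c : ι → ℍ[ℝ]) :
    ∑ i, normSq ((U *ᵥ c) i) = ∑ j, normSq (c j) := by
  rw [← re_star_dotProduct_self, ← re_star_dotProduct_self, star_mulVec_dotProduct_mulVec hU]

theorem sum_normSq_conjTranspose_mulVec_pos (hU : Uᴴ * U = 1) (hv : v ≠ 0) :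
    0 < ∑ j, normSq ((Uᴴ *ᵥ v) j) := by
  rw [sum_normSq_mulVec (by rwa [conjTranspose_conjTranspose, mul_eq_one_comm])]
  exact sum_normSq_pos hv

theorem re_mul_sum_normSq_eq (hU : Uᴴ * U = 1)
    (hSU : S * U = U * diagonal (fun j => (t j : ℍ[ℝ]))) (hv : S *ᵥ v = fun i => a * v i) :
    a.re * ∑ j, normSq ((Uᴴ *ᵥ v) j) = ∑ j, t j * normSq ((Uᴴ *ᵥ v) j) := by
  have hvc : v = U *ᵥ (Uᴴ *ᵥ v) := by rw [mulVec_mulVec, mul_eq_one_comm.mp hU, one_mulVec]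
  generalize Uᴴ *ᵥ v = c at hvc ⊢
  subst hvc
  calc a.re * ∑ j, normSq (c j) = (star (U *ᵥ c) ⬝ᵥ S *ᵥ U *ᵥ c).re := by
        rw [← sum_normSq_mulVec hU, hv, re_star_dotProduct_mul_left]
    _ = (star c ⬝ᵥ diagonal (fun j => (t j : ℍ[ℝ])) *ᵥ c).re := by
        rw [mulVec_mulVec, hSU, ← mulVec_mulVec, star_mulVec_dotProduct_mulVec hU]
    _ = ∑ j, t j * normSq (c j) := re_star_dotProduct_diagonal_mulVec t c

variable [LinearOrder ι]

theorem le_re_of_mulVec_eq (hU : Uᴴ * U = 1)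
    (hSU : S * U = U * diagonal (fun j => (t j : ℍ[ℝ]))) (ht : Monotone t)
    (hv : S *ᵥ v = fun i => a * v i) (hv0 : v ≠ 0) {i : ι}
    (hvi : ∀ j < i, (Uᴴ *ᵥ v) j = 0) :
    t i ≤ a.re := by
  refine le_of_mul_le_mul_right ?_ (sum_normSq_conjTranspose_mulVec_pos hU hv0)
  rw [re_mul_sum_normSq_eq hU hSU hv]
  exact ht.mul_sum_le_sum_mul (fun _ => normSq_nonneg) fun j hj => by simp [hvi j hj]

theorem re_le_of_mulVec_eq (hU : Uᴴ * U = 1)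
    (hSU : S * U = U * diagonal (fun j => (t j : ℍ[ℝ]))) (ht : Monotone t)
    (hv : S *ᵥ v = fun i => a * v i) (hv0 : v ≠ 0) {i : ι}
    (hvi : ∀ j, i < j → (Uᴴ *ᵥ v) j = 0) :
    a.re ≤ t i := by
  refine le_of_mul_le_mul_right ?_ (sum_normSq_conjTranspose_mulVec_pos hU hv0)
  rw [re_mul_sum_normSq_eq hU hSU hv]
  exact ht.sum_mul_le_mul_sum (fun _ => normSq_nonneg) fun j hj => by simp [hvi j hj]

end Quaternion

theorem left_eigenvalue_real_part_bounds {n : ℕ}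
    (S : Matrix (Fin n) (Fin n) ℍ[ℝ])
    (t : Fin n → ℝ) (ht : Monotone t) (u : Fin n → Fin n → ℍ[ℝ])
    (horth : ∀ i j, star (u i) ⬝ᵥ u j = if i = j then 1 else 0)
    (heig : ∀ j, S.mulVec (u j) = fun l => u j l * (t j : ℍ[ℝ]))
    (lam : ℍ[ℝ])
    (V : Submodule ℍ[ℝ]ᵐᵒᵖ (Fin n → ℍ[ℝ]))
    (hV : (V : Set (Fin n → ℍ[ℝ])) = {v | S.mulVec v = fun i => lam * v i})
    (k : ℕ) (hk : 1 ≤ k) (hkn : k ≤ n)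
    (hdim : k ≤ Module.finrank ℍ[ℝ]ᵐᵒᵖ V) :
    t ⟨k - 1, by omega⟩ ≤ lam.re ∧ lam.re ≤ t ⟨n - k, by omega⟩ := by
  set U : Matrix (Fin n) (Fin n) ℍ[ℝ] := (Matrix.of u)ᵀ
  have hU : Uᴴ * U = 1 := Matrix.ext fun i j => by
    simpa [U, mul_apply, one_apply, dotProduct] using horth i j
  have hSU : S * U = U * diagonal (fun j => (t j : ℍ[ℝ])) := Matrix.ext fun i j => by
    rw [mul_diagonal]
    simpa [U, mul_apply, mulVec, dotProduct] using congrFun (heig j) i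
  have heigV : ∀ v ∈ V, S *ᵥ v = fun i => lam * v i := fun v hv => by
    rwa [← SetLike.mem_coe, hV] at hv
  have hcoord : ∀ v j, (Uᴴ *ᵥ v) j = star (u j) ⬝ᵥ v := fun v j => rfl
  have hm : k - 1 < Module.finrank ℍ[ℝ]ᵐᵒᵖ V := by omega
  constructor
  · obtain ⟨v, hvV, hv0, hv⟩ := V.exists_ne_zero_forall_dotProduct_eq_zero hm
      fun j => star (u ⟨j, by omega⟩)
    exact le_re_of_mulVec_eq hU hSU ht (heigV v hvV) hv0 fun j hj =>
      (hcoord v j).trans (hv ⟨j, hj⟩)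
  · obtain ⟨v, hvV, hv0, hv⟩ := V.exists_ne_zero_forall_dotProduct_eq_zero hm
      fun j => star (u (Fin.rev ⟨j, by omega⟩))
    refine re_le_of_mulVec_eq hU hSU ht (heigV v hvV) hv0 fun j hj => ?_
    have hj' : (j.rev : ℕ) < k - 1 := by
      rw [Fin.lt_def, Fin.val_mk] at hj
      rw [Fin.val_rev]
      omega
    have := hv ⟨j.rev, hj'⟩
    simp only [Fin.eta, Fin.rev_rev] at this
    exact (hcoord v j).trans this
end
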